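/- arXiv:1904.12209 — 2 statements merged into one kernel-verified Lean document; each statement's English description precedes it below -/
import Mathlib

section
/- Let Γ ⊂ ℤ² be a finite nonempty convex domain. The map H ↦ [−Δ_Γ H] induces a group isomorphism from the quotient group ℋ_G^Γ = {H ∈ ℋ_ℚ^Γ : Δ_Γ H takes values in ℤ} / ℋ_ℤ^Γ onto the sandpile group G_Γ. -/
/-!
By the maximum principle `Δ_Γ` is invertible over `ℚ`, so `H ↦ Δ_Γ H` identifies the
harmonic functions with integral Laplacian with the integer functions vanishing on `Γ₀`, and
`ℋ_ℤ^Γ` with those among them lying in `Δ_Γ(ℤ^Γ)`; hence `H ↦ [−Δ_Γ H]` is injective on the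
quotient. It is surjective because every class of `G_Γ` has a representative vanishing on `Γ₀`:
`Δ_Γ n = m` is solvable over `ℤ` on `Γ₀`, since every interior vertex has its eastern neighbour
in `Γ`.
-/

/-- Two vertices of `ℤ²` are adjacent iff their Euclidean distance is `1`. -/
def adj (u v : ℤ × ℤ) : Prop := (u.1 - v.1) ^ 2 + (u.2 - v.2) ^ 2 = 1

instance : DecidableRel adj := fun u v => by unfold adj; infer_instance

/-- The reduced Laplacian of a finite domain `Γ ⊂ ℤ²`. -/
def lap {R : Type*} [CommRing R] (Γ : Finset (ℤ × ℤ)) (f : ↥Γ → R) : ↥Γ → R :=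
  fun v => (∑ w ∈ Γ.attach.filter (fun w => adj w.1 v.1), f w) - 4 * f v

lemma lap_add {R : Type*} [CommRing R] (Γ : Finset (ℤ × ℤ)) (f g : ↥Γ → R) :
    lap Γ (f + g) = lap Γ f + lap Γ g := by
  funext v; simp [lap, Finset.sum_add_distrib]; ring

lemma lap_neg {R : Type*} [CommRing R] (Γ : Finset (ℤ × ℤ)) (f : ↥Γ → R) :
    lap Γ (-f) = -(lap Γ f) := by
  funext v; simp [lap]; ring

lemma lap_smul {R : Type*} [CommRing R] (Γ : Finset (ℤ × ℤ)) (c : R) (f : ↥Γ → R) :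
    lap Γ (c • f) = c • lap Γ f := by
  funext v
  simp only [lap, Pi.smul_apply, smul_eq_mul, mul_sub, Finset.mul_sum]
  ring

lemma lap_zero {R : Type*} [CommRing R] (Γ : Finset (ℤ × ℤ)) :
    lap Γ (0 : ↥Γ → R) = 0 := by
  funext v; simp [lap]

/-- The boundary `∂Γ`: vertices of `Γ` adjacent to some vertex of `ℤ² \ Γ`. -/
noncomputable def boundary (Γ : Finset (ℤ × ℤ)) : Finset (ℤ × ℤ) :=
  @Finset.filter _ (fun v => ∃ w : ℤ × ℤ, w ∉ Γ ∧ adj w v) (Classical.decPred _) Γ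

lemma boundary_subset (Γ : Finset (ℤ × ℤ)) : boundary Γ ⊆ Γ :=
  @Finset.filter_subset _ (fun v => ∃ w : ℤ × ℤ, w ∉ Γ ∧ adj w v) (Classical.decPred _) Γ

/-- A function on `Γ` is harmonic if its Laplacian vanishes on the interior `Γ \ ∂Γ`. -/
def Harmonic {R : Type*} [CommRing R] (Γ : Finset (ℤ × ℤ)) (f : ↥Γ → R) : Prop :=
  ∀ v : ↥Γ, (v : ℤ × ℤ) ∉ boundary Γ → lap Γ f v = 0

/-- `Γ ⊂ ℤ²` is a convex domain if it is the set of lattice points of a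
convex open subset of `ℝ²`. -/
def IsConvexDomain (Γ : Finset (ℤ × ℤ)) : Prop :=
  ∃ P : Set (ℝ × ℝ), Convex ℝ P ∧ IsOpen P ∧
    ∀ v : ℤ × ℤ, v ∈ Γ ↔ ((v.1 : ℝ), (v.2 : ℝ)) ∈ P

/-- The reduced Laplacian as an additive group homomorphism on `ℤ^Γ`. -/
def lapHom (Γ : Finset (ℤ × ℤ)) : (↥Γ → ℤ) →+ (↥Γ → ℤ) where
  toFun := lap Γ
  map_zero' := lap_zero Γ
  map_add' := lap_add Γ

/-- The sandpile group `G_Γ = ℤ^Γ / Δ_Γ(ℤ^Γ)`. -/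
def SandpileGroup (Γ : Finset (ℤ × ℤ)) : Type :=
  (↥Γ → ℤ) ⧸ (lapHom Γ).range

instance (Γ : Finset (ℤ × ℤ)) : AddCommGroup (SandpileGroup Γ) :=
  inferInstanceAs (AddCommGroup ((↥Γ → ℤ) ⧸ (lapHom Γ).range))

/-- The canonical projection `ℤ^Γ → G_Γ`. -/
def sandMk (Γ : Finset (ℤ × ℤ)) : (↥Γ → ℤ) →+ SandpileGroup Γ :=
  QuotientAddGroup.mk' _

/-- The rational-valued harmonic functions on `Γ`, as an additive subgroup of `ℚ^Γ`. -/
def HarmQ (Γ : Finset (ℤ × ℤ)) : AddSubgroup (↥Γ → ℚ) where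
  carrier := {f | Harmonic Γ f}
  zero_mem' := fun v _ => by rw [lap_zero]; rfl
  add_mem' := by
    intro a b ha hb v hv
    rw [lap_add]
    simp [ha v hv, hb v hv]
  neg_mem' := by
    intro a ha v hv
    rw [lap_neg]
    simp [ha v hv]

/-- The integer-valued harmonic functions on `Γ`, regarded as an additive
subgroup of `ℚ^Γ`. -/
def HarmZinQ (Γ : Finset (ℤ × ℤ)) : AddSubgroup (↥Γ → ℚ) where
  carrier := {f | Harmonic Γ f ∧ ∀ v : ↥Γ, ∃ z : ℤ, f v = (z : ℚ)}
  zero_mem' := ⟨(HarmQ Γ).zero_mem, fun v => ⟨0, by simp⟩⟩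
  add_mem' := by
    intro a b ha hb
    refine ⟨(HarmQ Γ).add_mem ha.1 hb.1, fun v => ?_⟩
    obtain ⟨z1, h1⟩ := ha.2 v
    obtain ⟨z2, h2⟩ := hb.2 v
    exact ⟨z1 + z2, by simp [h1, h2]⟩
  neg_mem' := by
    intro a ha
    refine ⟨(HarmQ Γ).neg_mem ha.1, fun v => ?_⟩
    obtain ⟨z, h⟩ := ha.2 v
    exact ⟨-z, by simp [h]⟩

/-- The rational-valued harmonic functions on `Γ` whose Laplacian is
integer-valued, as an additive subgroup of `ℚ^Γ`. -/
def HarmIntLap (Γ : Finset (ℤ × ℤ)) : AddSubgroup (↥Γ → ℚ) where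
  carrier := {f | Harmonic Γ f ∧ ∀ v : ↥Γ, ∃ z : ℤ, lap Γ f v = (z : ℚ)}
  zero_mem' := ⟨(HarmQ Γ).zero_mem, fun v => ⟨0, by rw [lap_zero]; simp⟩⟩
  add_mem' := by
    intro a b ha hb
    refine ⟨(HarmQ Γ).add_mem ha.1 hb.1, fun v => ?_⟩
    obtain ⟨z1, h1⟩ := ha.2 v
    obtain ⟨z2, h2⟩ := hb.2 v
    exact ⟨z1 + z2, by rw [lap_add]; simp [h1, h2]⟩
  neg_mem' := by
    intro a ha
    refine ⟨(HarmQ Γ).neg_mem ha.1, fun v => ?_⟩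
    obtain ⟨z, h⟩ := ha.2 v
    exact ⟨-z, by rw [lap_neg]; simp [h]⟩

/-- The integer-valued harmonic functions on `Γ`, as a `ℤ`-submodule of `ℤ^Γ`. -/
def HarmZ (Γ : Finset (ℤ × ℤ)) : Submodule ℤ (↥Γ → ℤ) where
  carrier := {f | Harmonic Γ f}
  zero_mem' := fun v _ => by rw [lap_zero]; rfl
  add_mem' := by
    intro a b ha hb v hv
    rw [lap_add]
    simp [ha v hv, hb v hv]
  smul_mem' := by
    intro c a ha v hv
    rw [lap_smul]
    simp [ha v hv]

/-- The rational-valued harmonic functions on `Γ`, as a `ℚ`-submodule of `ℚ^Γ`. -/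
def HarmQmod (Γ : Finset (ℤ × ℤ)) : Submodule ℚ (↥Γ → ℚ) where
  carrier := {f | Harmonic Γ f}
  zero_mem' := fun v _ => by rw [lap_zero]; rfl
  add_mem' := by
    intro a b ha hb v hv
    rw [lap_add]
    simp [ha v hv, hb v hv]
  smul_mem' := by
    intro c a ha v hv
    rw [lap_smul]
    simp [ha v hv]

lemma adj_iff (w v : ℤ × ℤ) :
    adj w v ↔
      w = (v.1 + 1, v.2) ∨ w = (v.1 - 1, v.2) ∨ w = (v.1, v.2 + 1) ∨ w = (v.1, v.2 - 1) := by
  obtain ⟨a, b⟩ := w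
  obtain ⟨c, d⟩ := v
  simp only [adj, Prod.mk.injEq]
  constructor
  · intro h
    have hp : -1 ≤ a - c ∧ a - c ≤ 1 := by constructor <;> nlinarith [sq_nonneg (b - d)]
    have hq : -1 ≤ b - d ∧ b - d ≤ 1 := by constructor <;> nlinarith [sq_nonneg (a - c)]
    generalize hp' : a - c = p at h hp
    generalize hq' : b - d = q at h hq
    obtain ⟨hp₁, hp₂⟩ := hp
    obtain ⟨hq₁, hq₂⟩ := hq
    interval_cases p <;> interval_cases q <;> omega
  · rintro (⟨rfl, rfl⟩ | ⟨rfl, rfl⟩ | ⟨rfl, rfl⟩ | ⟨rfl, rfl⟩) <;> ring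

lemma mem_of_adj_of_notMem_boundary {Γ : Finset (ℤ × ℤ)} {v w : ℤ × ℤ} (hv : v ∈ Γ)
    (hint : v ∉ boundary Γ) (hadj : adj w v) : w ∈ Γ := by
  by_contra hw
  classical exact hint (Finset.mem_filter.2 ⟨hv, w, hw, hadj⟩)

def extendByZero {R : Type*} [Zero R] (Γ : Finset (ℤ × ℤ)) (f : ↥Γ → R) (p : ℤ × ℤ) : R :=
  if h : p ∈ Γ then f ⟨p, h⟩ else 0

lemma extendByZero_le {R : Type*} [Zero R] [LE R] {Γ : Finset (ℤ × ℤ)} {f : ↥Γ → R} {M : R}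
    (hf : ∀ v, f v ≤ M) (hM : 0 ≤ M) (p : ℤ × ℤ) : extendByZero Γ f p ≤ M := by
  unfold extendByZero
  split_ifs
  exacts [hf _, hM]

lemma lap_apply {R : Type*} [CommRing R] (Γ : Finset (ℤ × ℤ)) (f : ↥Γ → R) (v : ↥Γ) :
    lap Γ f v = extendByZero Γ f (v.1.1 + 1, v.1.2) + extendByZero Γ f (v.1.1 - 1, v.1.2)
      + extendByZero Γ f (v.1.1, v.1.2 + 1) + extendByZero Γ f (v.1.1, v.1.2 - 1) - 4 * f v := by
  obtain ⟨⟨x, y⟩, _⟩ := v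
  have hnbrs : ∑ w ∈ Γ.attach.filter (fun w => adj w.1 (x, y)), f w
      = ∑ p ∈ Γ.filter (fun p => adj p (x, y)), extendByZero Γ f p := by
    rw [Finset.sum_filter, Finset.sum_filter, ← Finset.sum_attach Γ]
    refine Finset.sum_congr rfl fun w _ => ?_
    simp [extendByZero]
  have hfour : ∑ p ∈ Γ.filter (fun p => adj p (x, y)), extendByZero Γ f p
      = ∑ p ∈ {(x + 1, y), (x - 1, y), (x, y + 1), (x, y - 1)}, extendByZero Γ f p := by
    apply Finset.sum_subset
    · intro p hp
      simpa using (adj_iff p (x, y)).1 (Finset.mem_filter.1 hp).2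
    · intro p hp hpΓ
      have hadj : adj p (x, y) := (adj_iff p (x, y)).2 (by simpa using hp)
      simp_all [extendByZero]
  rw [lap, hnbrs, hfour, Finset.sum_insert (by grind), Finset.sum_insert (by grind),
    Finset.sum_pair (by grind)]
  ring

section MaximumPrinciple

variable {R : Type*} [CommRing R] [LinearOrder R] [IsStrictOrderedRing R] (Γ : Finset (ℤ × ℤ))

/-- At a maximiser of `f` with the largest first coordinate, the eastern neighbour contributes
strictly less than a positive maximum: it lies outside `Γ` or is not a maximiser. -/
lemma le_zero_of_lap_eq_zero {f : ↥Γ → R} (hf : lap Γ f = 0) (v : ↥Γ) : f v ≤ 0 := by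
  by_contra! hpos
  obtain ⟨u, -, hu⟩ := Γ.attach.exists_max_image f ⟨v, Γ.mem_attach v⟩
  have hM : 0 < f u := hpos.trans_le (hu v (Γ.mem_attach v))
  have hmax : ∀ w, f w ≤ f u := fun w => hu w (Γ.mem_attach w)
  obtain ⟨a, ha, ha_east⟩ := (Γ.attach.filter (f · = f u)).exists_max_image (·.1.1)
    ⟨u, Finset.mem_filter.2 ⟨Γ.mem_attach u, rfl⟩⟩
  have hfa : f a = f u := (Finset.mem_filter.1 ha).2
  have heast : extendByZero Γ f (a.1.1 + 1, a.1.2) < f u := by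
    unfold extendByZero
    split_ifs with he
    · refine (hmax _).lt_of_ne fun heq => ?_
      have := ha_east ⟨_, he⟩ (Finset.mem_filter.2 ⟨Γ.mem_attach _, heq⟩)
      simp at this
    · exact hM
  have := congrFun hf a
  rw [lap_apply, hfa, Pi.zero_apply] at this
  linarith [extendByZero_le hmax hM.le (a.1.1 - 1, a.1.2),
    extendByZero_le hmax hM.le (a.1.1, a.1.2 + 1), extendByZero_le hmax hM.le (a.1.1, a.1.2 - 1)]

lemma lap_injective : Function.Injective (lap Γ : (↥Γ → R) → (↥Γ → R)) := by
  intro f g hfg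
  have hsub : lap Γ (f - g) = 0 := by rw [sub_eq_add_neg, lap_add, lap_neg, hfg, add_neg_cancel]
  have h₁ : f - g ≤ 0 := le_zero_of_lap_eq_zero Γ hsub
  have h₂ : -(f - g) ≤ 0 := le_zero_of_lap_eq_zero Γ (by rw [lap_neg, hsub, neg_zero])
  exact sub_eq_zero.1 (le_antisymm h₁ (neg_nonpos.1 h₂))

end MaximumPrinciple

lemma lap_surjective {K : Type*} [Field K] [LinearOrder K] [IsStrictOrderedRing K]
    (Γ : Finset (ℤ × ℤ)) : Function.Surjective (lap Γ : (↥Γ → K) → (↥Γ → K)) :=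
  let L : (↥Γ → K) →ₗ[K] (↥Γ → K) :=
    { toFun := lap Γ, map_add' := lap_add Γ, map_smul' := lap_smul Γ }
  (LinearMap.injective_iff_surjective (f := L)).1 (lap_injective Γ)

section Interior

variable {R : Type*} [CommRing R] (Γ : Finset (ℤ × ℤ))

lemma lap_map {S : Type*} [CommRing S] (φ : R →+* S) (f : ↥Γ → R) :
    lap Γ (φ ∘ f) = φ ∘ lap Γ f := by
  funext v
  simp [lap, map_sum, map_ofNat]

lemma lap_single (e v : ↥Γ) (c : R) :
    lap Γ (Pi.single e c) v =
      (if adj e.1 v.1 then c else 0) - 4 * (Pi.single e c : ↥Γ → R) v := by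
  simp [lap, Finset.sum_pi_single']

lemma lap_single_east {a e v : ↥Γ} (he : e.1 = (a.1.1 + 1, a.1.2)) (hv : v.1.1 ≤ a.1.1) (c : R) :
    lap Γ (Pi.single e c) v = (Pi.single a c : ↥Γ → R) v := by
  have hve : v ≠ e := fun h => by rw [h, he] at hv; simp at hv
  have hadj : adj e.1 v.1 ↔ v = a := by
    rw [adj_iff, he, ← Subtype.coe_inj]
    obtain ⟨⟨x, y⟩, _⟩ := v
    obtain ⟨⟨x', y'⟩, _⟩ := a
    simp only [Prod.mk.injEq] at hv ⊢
    omega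
  by_cases hva : v = a
  · subst hva; simp [lap_single, hadj, hve]
  · simp [lap_single, hadj, hve, hva]

/-- Sweep the interior from west to east: the value of `Δ_Γ n` at an interior vertex is corrected
by a mass at its eastern neighbour, which does not disturb the columns already treated. -/
lemma exists_lap_eq_on_interior (m : ↥Γ → R) :
    ∃ n : ↥Γ → R, ∀ v : ↥Γ, v.1 ∉ boundary Γ → lap Γ n v = m v := by
  classical
  suffices ∀ s : Finset ↥Γ, ∃ n : ↥Γ → R, ∀ v ∈ s, v.1 ∉ boundary Γ → lap Γ n v = m v by
    obtain ⟨n, hn⟩ := this Finset.univ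
    exact ⟨n, fun v => hn v (Finset.mem_univ v)⟩
  intro s
  induction s using Finset.induction_on_max_value (fun v : ↥Γ => v.1.1) with
  | empty => exact ⟨0, by simp⟩
  | insert a s _ has ih =>
    obtain ⟨n, hn⟩ := ih
    by_cases ha : a.1 ∈ boundary Γ
    · exact ⟨n, fun v hv hvint => hn v ((Finset.mem_insert.1 hv).resolve_left
        (by rintro rfl; exact hvint ha)) hvint⟩
    have he : (a.1.1 + 1, a.1.2) ∈ Γ :=
      mem_of_adj_of_notMem_boundary a.2 ha ((adj_iff _ _).2 (Or.inl rfl))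
    refine ⟨n + Pi.single ⟨_, he⟩ (m a - lap Γ n a), fun v hv hvint => ?_⟩
    have hva : v.1.1 ≤ a.1.1 := by
      rcases Finset.mem_insert.1 hv with rfl | hv
      exacts [le_rfl, has v hv]
    rw [lap_add, Pi.add_apply, lap_single_east Γ rfl hva]
    rcases Finset.mem_insert.1 hv with rfl | hv
    · simp
    · have hne : v ≠ a := by rintro rfl; contradiction
      simp [hn v hv hvint, hne]

end Interior

section HarmonicToSandpile

variable {Γ : Finset (ℤ × ℤ)}

noncomputable def intLap (H : ↥(HarmIntLap Γ)) : ↥Γ → ℤ := fun v => (H.2.2 v).choose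

lemma intCast_intLap (H : ↥(HarmIntLap Γ)) (v : ↥Γ) : (intLap H v : ℚ) = lap Γ H.1 v :=
  (H.2.2 v).choose_spec.symm

lemma intLap_eq {H : ↥(HarmIntLap Γ)} {g : ↥Γ → ℤ} (hg : ∀ v, (g v : ℚ) = lap Γ H.1 v) :
    intLap H = g :=
  funext fun v => Int.cast_injective ((intCast_intLap H v).trans (hg v).symm)

variable (Γ) in
noncomputable def harmonicToSandpile : ↥(HarmIntLap Γ) →+ SandpileGroup Γ where
  toFun H := sandMk Γ (-intLap H)
  map_zero' := by
    rw [intLap_eq (H := 0) (g := 0) fun v => by simp [lap_zero], neg_zero, map_zero]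
  map_add' H K := by
    rw [intLap_eq (g := intLap H + intLap K) (H := H + K) fun v => by
      simp [lap_add, intCast_intLap], neg_add, map_add]

lemma harmonicToSandpile_apply {H : ↥(HarmIntLap Γ)} {g : ↥Γ → ℤ}
    (hg : ∀ v, (g v : ℚ) = lap Γ H.1 v) :
    harmonicToSandpile Γ H = sandMk Γ (-g) := by
  rw [harmonicToSandpile, AddMonoidHom.coe_mk, ZeroHom.coe_mk, intLap_eq hg]

lemma sandMk_eq_zero_iff {g : ↥Γ → ℤ} : sandMk Γ g = 0 ↔ ∃ n, lap Γ n = g :=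
  QuotientAddGroup.eq_zero_iff g

lemma ker_harmonicToSandpile :
    (harmonicToSandpile Γ).ker = (HarmZinQ Γ).addSubgroupOf (HarmIntLap Γ) := by
  ext H
  rw [AddMonoidHom.mem_ker, AddSubgroup.mem_addSubgroupOf,
    harmonicToSandpile_apply (intCast_intLap H), sandMk_eq_zero_iff]
  constructor
  · rintro ⟨n, hn⟩
    have hH : H.1 = Int.cast ∘ (-n) := by
      refine lap_injective Γ (funext fun v => ?_)
      have := congrFun (lap_map Γ (Int.castRingHom ℚ) (-n)) v
      simp_all [intCast_intLap, lap_neg]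
    exact ⟨H.2.1, fun v => ⟨-n v, by simp [hH]⟩⟩
  · rintro ⟨-, hint⟩
    choose z hz using hint
    have hH : H.1 = Int.cast ∘ z := funext hz
    refine ⟨-z, ?_⟩
    rw [lap_neg, intLap_eq (g := lap Γ z) fun v => ?_]
    have := congrFun (lap_map Γ (Int.castRingHom ℚ) z) v
    simp_all

lemma harmonicToSandpile_surjective : Function.Surjective (harmonicToSandpile Γ) := by
  intro q
  obtain ⟨m, rfl⟩ := QuotientAddGroup.mk'_surjective (lapHom Γ).range q
  obtain ⟨n, hn⟩ := exists_lap_eq_on_interior Γ (-m)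
  obtain ⟨H, hH⟩ := lap_surjective Γ fun v => ((-(m + lap Γ n) v : ℤ) : ℚ)
  have hmem : H ∈ HarmIntLap Γ :=
    ⟨fun v hv => by simp [hH, hn v hv], fun v => ⟨_, congrFun hH v⟩⟩
  refine ⟨⟨H, hmem⟩, ?_⟩
  rw [harmonicToSandpile_apply (g := -(m + lap Γ n)) fun v => (congrFun hH v).symm, neg_neg,
    map_add, sandMk_eq_zero_iff.2 ⟨n, rfl⟩, add_zero]
  rfl

end HarmonicToSandpile

theorem sandpile_group_iso_harmonic_general (Γ : Finset (ℤ × ℤ)) :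
    ∃ e : (↥(HarmIntLap Γ) ⧸ (HarmZinQ Γ).addSubgroupOf (HarmIntLap Γ)) ≃+ SandpileGroup Γ,
      ∀ (H : ↥(HarmIntLap Γ)) (g : ↥Γ → ℤ),
        (∀ v : ↥Γ, (g v : ℚ) = lap Γ (↑H : ↥Γ → ℚ) v) →
        e (QuotientAddGroup.mk H) = sandMk Γ (-g) :=
  ⟨(QuotientAddGroup.quotientAddEquivOfEq ker_harmonicToSandpile.symm).trans
      (QuotientAddGroup.quotientKerEquivOfSurjective _ harmonicToSandpile_surjective),
    fun _ _ hg => harmonicToSandpile_apply hg⟩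

/-- For a finite nonempty convex domain `Γ ⊂ ℤ²`, the map
`H ↦ [−Δ_Γ H]` induces a group isomorphism from
`ℋ_G^Γ = {H ∈ ℋ_ℚ^Γ : Δ_Γ H ∈ ℤ^Γ} / ℋ_ℤ^Γ` onto the sandpile group `G_Γ`. -/
theorem sandpile_group_iso_harmonic (Γ : Finset (ℤ × ℤ)) (hne : Γ.Nonempty)
    (hconv : IsConvexDomain Γ) :
    ∃ e : (↥(HarmIntLap Γ) ⧸ (HarmZinQ Γ).addSubgroupOf (HarmIntLap Γ)) ≃+ SandpileGroup Γ,
      ∀ (H : ↥(HarmIntLap Γ)) (g : ↥Γ → ℤ),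
        (∀ v : ↥Γ, (g v : ℚ) = lap Γ (↑H : ↥Γ → ℚ) v) →
        e (QuotientAddGroup.mk H) = sandMk Γ (-g) :=
  sandpile_group_iso_harmonic_general Γ
end

section
/- For every odd N ≥ 1, the sandpile group G_{Γ_N} on an N×N square domain Γ_N ⊂ ℤ² contains a cyclic subgroup of order (N+1)/2. -/
/-- The `N×N` square domain `Γ_N = {1, …, N} × {1, …, N} ⊂ ℤ²`. -/
noncomputable def squareDomain (N : ℕ) : Finset (ℤ × ℤ) :=
  Finset.Icc 1 (N : ℤ) ×ˢ Finset.Icc 1 (N : ℤ)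

/-!
The function `(x, y) ↦ x y` is harmonic on `ℤ²` and vanishes modulo `N + 1` on the lines
`x ∈ {0, N + 1}` and `y ∈ {0, N + 1}` surrounding `Γ_N`. Since the Laplacian is symmetric,
pairing with it gives a homomorphism `G_{Γ_N} → ℤ/(N + 1)` sending the chip at the corner
`(1, 1)` to `1`. By the discrete maximum principle the Laplacian is nonsingular, so its determinant
annihilates `G_Γ` (through the adjugate). Hence the corner chip has finite order divisible by
`N + 1`, and for every divisor `m` of `N + 1`, such as `(N + 1) / 2` for odd `N`, a multiple of it
generates a cyclic subgroup of order `m`.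
-/

open Finset Matrix

lemma exists_isAddCyclic_card_eq_of_map_eq_one {G : Type*} [AddGroup G] {m : ℕ}
    (φ : G →+ ZMod m) {x : G} (hx : IsOfFinAddOrder x) (hφx : φ x = 1) :
    ∃ S : AddSubgroup G, IsAddCyclic S ∧ Nat.card S = m := by
  have hm : m ∣ addOrderOf x := ZMod.addOrderOf_one m ▸ hφx ▸ addOrderOf_map_dvd φ x
  have hx₀ : addOrderOf x ≠ 0 := hx.addOrderOf_pos.ne'
  have hm₀ : m ≠ 0 := by
    rintro rfl
    exact hx₀ (zero_dvd_iff.mp hm)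
  refine ⟨AddSubgroup.zmultiples ((addOrderOf x / m) • x), inferInstance, ?_⟩
  rw [Nat.card_zmultiples, addOrderOf_nsmul_of_dvd
    ((Nat.div_ne_zero_iff_of_dvd hm).mpr ⟨hx₀, hm₀⟩) (Nat.div_dvd_of_dvd hm),
    Nat.div_div_self hm hx₀]

lemma adj_comm (u v : ℤ × ℤ) : adj u v ↔ adj v u := by
  unfold adj
  constructor <;> intro h <;> linear_combination h

def neighbors (v : ℤ × ℤ) : Finset (ℤ × ℤ) :=
  {(v.1 - 1, v.2), (v.1 + 1, v.2), (v.1, v.2 - 1), (v.1, v.2 + 1)}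

lemma adj_iff_mem_neighbors {w v : ℤ × ℤ} : adj w v ↔ w ∈ neighbors v := by
  obtain ⟨⟨a, b⟩, rfl⟩ : ∃ d : ℤ × ℤ, w = (v.1 + d.1, v.2 + d.2) :=
    ⟨(w.1 - v.1, w.2 - v.2), by simp⟩
  simp only [adj, neighbors, mem_insert, mem_singleton, Prod.ext_iff, add_sub_cancel_left]
  constructor
  · intro h
    obtain ⟨ha₁, ha₂⟩ : -1 ≤ a ∧ a ≤ 1 :=
      abs_le.mp (abs_le_one_iff_mul_self_le_one.mpr (by nlinarith [sq_nonneg b]))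
    obtain ⟨hb₁, hb₂⟩ : -1 ≤ b ∧ b ≤ 1 :=
      abs_le.mp (abs_le_one_iff_mul_self_le_one.mpr (by nlinarith [sq_nonneg a]))
    interval_cases a <;> interval_cases b <;> simp_all <;> omega
  · rintro (⟨h₁, h₂⟩ | ⟨h₁, h₂⟩ | ⟨h₁, h₂⟩ | ⟨h₁, h₂⟩) <;>
      nlinarith

lemma sum_neighbors {M : Type*} [AddCommMonoid M] (F : ℤ × ℤ → M) (v : ℤ × ℤ) :
    ∑ w ∈ neighbors v, F w =
      F (v.1 - 1, v.2) + F (v.1 + 1, v.2) + F (v.1, v.2 - 1) + F (v.1, v.2 + 1) := by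
  rw [neighbors, sum_insert, sum_insert, sum_insert, sum_singleton, add_assoc, add_assoc] <;>
    simp [Prod.ext_iff] <;> omega

lemma sum_adj_eq_sum_neighbors {M : Type*} [AddCommMonoid M] (Γ : Finset (ℤ × ℤ))
    (F : ℤ × ℤ → M) (v : ℤ × ℤ) (hF : ∀ w ∈ neighbors v, w ∉ Γ → F w = 0) :
    ∑ w ∈ Γ.attach with adj w.1 v, F w = ∑ w ∈ neighbors v, F w := by
  rw [sum_filter, sum_attach Γ (fun w => if adj w v then F w else 0), ← sum_filter]
  refine sum_subset_zero_on_sdiff (fun w hw => adj_iff_mem_neighbors.mp (mem_filter.mp hw).2)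
    (fun w hw => ?_) (fun _ _ => rfl)
  obtain ⟨hw, hwΓ⟩ := mem_sdiff.mp hw
  exact hF w hw fun h => hwΓ (mem_filter.mpr ⟨h, adj_iff_mem_neighbors.mpr hw⟩)

lemma extend_val_apply_of_notMem {M : Type*} [Zero M] {Γ : Finset (ℤ × ℤ)} (f : Γ → M)
    {w : ℤ × ℤ} (hw : w ∉ Γ) : Function.extend Subtype.val f 0 w = 0 :=
  Function.extend_apply' f (0 : ℤ × ℤ → M) w fun ⟨a, ha⟩ => hw (ha ▸ a.2)

section Laplacian

variable {R : Type*} [CommRing R] (Γ : Finset (ℤ × ℤ))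

def lapMatrix : Matrix Γ Γ R :=
  of (fun v w : Γ => if adj w v then (1 : R) else 0) - (4 : R) • 1

lemma lap_eq_mulVec (f : Γ → R) : lap Γ f = lapMatrix Γ *ᵥ f := by
  rw [lapMatrix, sub_mulVec, smul_mulVec, one_mulVec]
  funext v
  simp [lap, mulVec, dotProduct, Finset.sum_filter]

lemma lapMatrix_isSymm : (lapMatrix Γ : Matrix Γ Γ R).IsSymm := by
  ext v w
  simp [lapMatrix, one_apply, eq_comm (a := v), adj_comm (w : ℤ × ℤ)]

lemma dotProduct_lap_comm (g f : Γ → R) : g ⬝ᵥ lap Γ f = lap Γ g ⬝ᵥ f := by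
  rw [lap_eq_mulVec, lap_eq_mulVec, dotProduct_mulVec, ← mulVec_transpose,
    (lapMatrix_isSymm Γ).eq]

lemma map_lap {S : Type*} [CommRing S] (φ : R →+* S) (f : Γ → R) :
    φ ∘ lap Γ f = lap Γ (φ ∘ f) := by
  funext v
  simp [lap, map_sum, map_ofNat]

lemma lap_adjugate_mulVec (f : Γ → R) :
    lap Γ (adjugate (lapMatrix Γ) *ᵥ f) = (lapMatrix Γ : Matrix Γ Γ R).det • f := by
  rw [lap_eq_mulVec, mulVec_mulVec, mul_adjugate, smul_mulVec, one_mulVec]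

variable {Γ}

lemma lap_apply_eq_sum_neighbors (f : Γ → R) (v : Γ) :
    lap Γ f v = ∑ w ∈ neighbors v, Function.extend Subtype.val f 0 w - 4 * f v := by
  rw [lap, ← sum_adj_eq_sum_neighbors Γ _ v fun w _ => extend_val_apply_of_notMem f]
  simp only [Subtype.val_injective.extend_apply]

lemma lap_eq_zero_of_sum_neighbors (H : ℤ × ℤ → R)
    (hharm : ∀ v ∈ Γ, ∑ w ∈ neighbors v, H w = 4 * H v)
    (hvanish : ∀ v ∈ Γ, ∀ w ∈ neighbors v, w ∉ Γ → H w = 0) :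
    lap Γ (fun v => H v) = 0 := by
  funext v
  rw [lap, sum_adj_eq_sum_neighbors Γ H v (hvanish v v.2), hharm v v.2, sub_self,
    Pi.zero_apply]

end Laplacian

section MaximumPrinciple

variable {R : Type*} [CommRing R] [LinearOrder R] [IsStrictOrderedRing R] {Γ : Finset (ℤ × ℤ)}

lemma nonpos_of_lap_eq_zero {f : Γ → R} (hf : lap Γ f = 0) (v : Γ) : f v ≤ 0 := by
  by_contra! hv
  -- Among the maximisers of `f`, `u` has the largest first coordinate, so the value to its right
  -- (`0` if outside `Γ`) is strictly below the maximum, and `lap Γ f u < 0`.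
  obtain ⟨u, -, hu⟩ :=
    exists_max_image Γ.attach (fun w => toLex (f w, w.1.1)) ⟨v, mem_attach _ _⟩
  have hmax (w : Γ) : f w < f u ∨ f w = f u ∧ w.1.1 ≤ u.1.1 :=
    Prod.Lex.le_iff.mp (hu w (mem_attach _ _))
  have hle (w : Γ) : f w ≤ f u := by rcases hmax w with h | h <;> [exact h.le; exact h.1.le]
  have hpos : 0 < f u := hv.trans_le (hle v)
  have hFu (w : ℤ × ℤ) : Function.extend Subtype.val f 0 w ≤ f u := by
    by_cases hw : w ∈ Γ
    · exact (Subtype.val_injective.extend_apply f 0 ⟨w, hw⟩).trans_le (hle _)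
    · exact (extend_val_apply_of_notMem f hw).trans_le hpos.le
  have hFright : Function.extend Subtype.val f 0 (u.1.1 + 1, u.1.2) < f u := by
    by_cases hw : (u.1.1 + 1, u.1.2) ∈ Γ
    · rw [Subtype.val_injective.extend_apply f 0 ⟨_, hw⟩]
      exact (hmax ⟨_, hw⟩).resolve_right fun h => absurd h.2 (by simp)
    · rwa [extend_val_apply_of_notMem f hw]
  have hlap := lap_apply_eq_sum_neighbors f u
  rw [hf, Pi.zero_apply, sum_neighbors] at hlap
  linarith [hFu (u.1.1 - 1, u.1.2), hFu (u.1.1, u.1.2 - 1), hFu (u.1.1, u.1.2 + 1)]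

lemma eq_zero_of_lap_eq_zero {f : Γ → R} (hf : lap Γ f = 0) : f = 0 := by
  have hneg : lap Γ (-f) = 0 := by rw [lap_neg, hf, neg_zero]
  funext v
  exact le_antisymm (nonpos_of_lap_eq_zero hf v) (neg_nonpos.mp (nonpos_of_lap_eq_zero hneg v))

lemma det_lapMatrix_ne_zero : (lapMatrix Γ : Matrix Γ Γ R).det ≠ 0 := fun hdet => by
  obtain ⟨f, hf0, hf⟩ := exists_mulVec_eq_zero_iff.mpr hdet
  exact hf0 (eq_zero_of_lap_eq_zero (by rwa [lap_eq_mulVec]))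

end MaximumPrinciple

namespace SandpileGroup

variable {Γ : Finset (ℤ × ℤ)}

lemma isOfFinAddOrder (x : SandpileGroup Γ) : IsOfFinAddOrder x := by
  obtain ⟨f, rfl⟩ : ∃ f, sandMk Γ f = x := QuotientAddGroup.mk'_surjective _ x
  refine isOfFinAddOrder_iff_zsmul_eq_zero.mpr ⟨(lapMatrix Γ).det, det_lapMatrix_ne_zero, ?_⟩
  rw [← map_zsmul]
  exact (QuotientAddGroup.eq_zero_iff _).mpr ⟨_, lap_adjugate_mulVec Γ f⟩

variable {R : Type*} [CommRing R]

def pairing (h : Γ → R) (hh : lap Γ h = 0) : SandpileGroup Γ →+ R :=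
  QuotientAddGroup.lift (lapHom Γ).range
    (AddMonoidHom.mk' (fun f => h ⬝ᵥ ((↑) ∘ f)) fun f g => by
      rw [← dotProduct_add]
      congr 1
      ext v
      simp)
    (by
      rintro _ ⟨f, rfl⟩
      change h ⬝ᵥ (Int.castRingHom R ∘ lap Γ f) = 0
      rw [map_lap, dotProduct_lap_comm, hh, zero_dotProduct])

lemma pairing_sandMk (h : Γ → R) (hh : lap Γ h = 0) (f : Γ → ℤ) :
    pairing h hh (sandMk Γ f) = h ⬝ᵥ ((↑) ∘ f) := rfl

end SandpileGroup

lemma mem_squareDomain {N : ℕ} {w : ℤ × ℤ} :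
    w ∈ squareDomain N ↔ (1 ≤ w.1 ∧ w.1 ≤ N) ∧ 1 ≤ w.2 ∧ w.2 ≤ N := by
  simp [squareDomain, mem_Icc]

lemma neighbors_outside_squareDomain {N : ℕ} {v w : ℤ × ℤ} (hv : v ∈ squareDomain N)
    (hw : w ∈ neighbors v) (hwN : w ∉ squareDomain N) :
    (w.1 = 0 ∨ w.1 = N + 1) ∨ (w.2 = 0 ∨ w.2 = N + 1) := by
  simp only [mem_squareDomain, neighbors, mem_insert, mem_singleton] at hv hw hwN
  rcases hw with rfl | rfl | rfl | rfl <;> simp only at hwN ⊢ <;> omega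

lemma lap_squareDomain_mul_eq_zero {N m : ℕ} (hm : m ∣ N + 1) :
    lap (squareDomain N) (fun v => ((v.1.1 * v.1.2 : ℤ) : ZMod m)) = 0 := by
  refine lap_eq_zero_of_sum_neighbors (fun w => ((w.1 * w.2 : ℤ) : ZMod m)) (fun v _ => ?_)
    (fun v hv w hw hwN => ?_)
  · rw [sum_neighbors]
    push_cast
    ring
  · have hm' : (m : ℤ) ∣ N + 1 := mod_cast hm
    rw [ZMod.intCast_zmod_eq_zero_iff_dvd]
    rcases neighbors_outside_squareDomain hv hw hwN with (h | h) | (h | h) <;> rw [h]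
    · simp
    · exact hm'.mul_right _
    · simp
    · exact hm'.mul_left _

theorem SandpileGroup.exists_isAddCyclic_card_squareDomain {N m : ℕ} (hN : 1 ≤ N)
    (hm : m ∣ N + 1) :
    ∃ S : AddSubgroup (SandpileGroup (squareDomain N)), IsAddCyclic S ∧ Nat.card S = m := by
  have hcorner : ((1, 1) : ℤ × ℤ) ∈ squareDomain N := mem_squareDomain.mpr (by omega)
  refine exists_isAddCyclic_card_eq_of_map_eq_one
    (SandpileGroup.pairing _ (lap_squareDomain_mul_eq_zero hm))
    (SandpileGroup.isOfFinAddOrder (sandMk _ (Pi.single ⟨_, hcorner⟩ 1))) ?_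
  rw [SandpileGroup.pairing_sandMk]
  simp [dotProduct, Pi.single_apply]

/-- For every odd `N ≥ 1`, the sandpile group on the `N×N`
square domain contains a cyclic subgroup of order `(N+1)/2`. -/
theorem square_has_cyclic_subgroup_odd (N : ℕ) (hN : 1 ≤ N) (hodd : Odd N) :
    ∃ S : AddSubgroup (SandpileGroup (squareDomain N)),
      IsAddCyclic ↥S ∧ Nat.card ↥S = (N + 1) / 2 :=
  SandpileGroup.exists_isAddCyclic_card_squareDomain hN
    (Nat.div_dvd_of_dvd hodd.add_one.two_dvd)
end
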